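/- arXiv:2504.04134 — 5 statements merged into one kernel-verified Lean document; each statement's English description precedes it below -/
import Mathlib

section
/- Let G be a finite group and let ρ : G → U(d) be an irreducible unitary representation of G on ℂ^d (given as a monoid homomorphism from G to the unitary group of d × d complex matrices whose associated representation has no nontrivial invariant subspace). Then for all indices i, j, i', j' ∈ {1, …, d} one has (1/|G|) · Σ_{g ∈ G} ρ(g)_{ij} · conj(ρ(g)_{i'j'}) = 1/d if i = i' and j = j', and = 0 otherwise. -/
/-!
Averaging `E = single j j' 1` over conjugation by `ρ` gives a matrix commuting with every `ρ g`,
hence a scalar `c • 1` by Schur's lemma; comparing traces gives `c = |G| [j = j'] / d`. Since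
`ρ g⁻¹ = (ρ g)ᴴ`, the `(i, i')` entry of that average is `∑ g, ρ(g)_{ij} conj ρ(g)_{i'j'}`.
-/

open scoped ComplexConjugate

/-- A matrix representation (valued in unitary matrices) is irreducible if the corresponding
module `ℂ^d` has no invariant subspace other than `⊥` and `⊤`. -/
def IsIrreducibleUnitaryRep {G : Type*} [Group G] {d : ℕ}
    (ρ : G →* Matrix.unitaryGroup (Fin d) ℂ) : Prop :=
  ∀ W : Submodule ℂ (Fin d → ℂ),
    (∀ g : G, ∀ v ∈ W, (ρ g : Matrix (Fin d) (Fin d) ℂ).mulVec v ∈ W) →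
    W = ⊥ ∨ W = ⊤

open Finset

theorem MonoidHom.commute_sum_conj {G R : Type*} [Group G] [Fintype G] [Semiring R]
    (σ : G →* R) (a : R) (h : G) : Commute (σ h) (∑ g, σ g * a * σ g⁻¹) := by
  have hcancel : σ h⁻¹ * σ h = 1 := by rw [← map_mul, inv_mul_cancel, map_one]
  change σ h * _ = _ * σ h
  rw [mul_sum, sum_mul]
  refine Fintype.sum_equiv (Equiv.mulLeft h) _ _ fun g => ?_
  simp only [Equiv.coe_mulLeft, mul_inv_rev, map_mul, mul_assoc, hcancel, mul_one]

theorem Matrix.trace_conj_monoidHom {G n R : Type*} [Group G] [Fintype n] [DecidableEq n]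
    [CommSemiring R] (σ : G →* Matrix n n R) (A : Matrix n n R) (g : G) :
    (σ g * A * σ g⁻¹).trace = A.trace := by
  rw [Matrix.trace_mul_cycle, ← map_mul, inv_mul_cancel, map_one, one_mul]

theorem Matrix.mul_single_mul_apply {n R : Type*} [Fintype n] [DecidableEq n] [Semiring R]
    (A B : Matrix n n R) (i j k l : n) (c : R) :
    (A * Matrix.single j k c * B) i l = A i j * c * B k l := by
  rw [Matrix.mul_assoc, Matrix.mul_apply, sum_eq_single j
    (fun m _ hm => by rw [Matrix.single_mul_apply_of_ne _ _ _ _ _ hm, mul_zero])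
    (fun hj => absurd (mem_univ j) hj), Matrix.single_mul_apply_same, mul_assoc]

open Module.End in
theorem IsIrreducibleUnitaryRep.exists_eq_smul_one {G : Type*} [Group G] {d : ℕ}
    {ρ : G →* Matrix.unitaryGroup (Fin d) ℂ} (hirr : IsIrreducibleUnitaryRep ρ)
    {T : Matrix (Fin d) (Fin d) ℂ} (hT : ∀ g, Commute (ρ g : Matrix (Fin d) (Fin d) ℂ) T) :
    ∃ c : ℂ, T = c • 1 := by
  cases isEmpty_or_nonempty (Fin d)
  · exact ⟨0, Subsingleton.elim _ _⟩
  obtain ⟨c, hc⟩ := exists_eigenvalue (Matrix.toLinAlgEquiv' T)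
  have hinv : ∀ g : G, ∀ v ∈ eigenspace (Matrix.toLinAlgEquiv' T) c,
      (ρ g : Matrix (Fin d) (Fin d) ℂ).mulVec v ∈ eigenspace (Matrix.toLinAlgEquiv' T) c :=
    fun g v hv => mapsTo_genEigenspace_of_comm ((hT g).symm.map Matrix.toLinAlgEquiv') c 1 hv
  refine ⟨c, sub_eq_zero.mp (Matrix.toLinAlgEquiv'.injective ?_)⟩
  rcases hirr _ hinv with hbot | htop
  · exact absurd hbot hc
  · rw [eigenspace_def, LinearMap.ker_eq_top, ← map_one Matrix.toLinAlgEquiv', ← map_smul,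
      ← map_sub] at htop
    rw [htop, map_zero]

theorem IsIrreducibleUnitaryRep.sum_conj_eq {G : Type*} [Group G] [Fintype G] {d : ℕ}
    {ρ : G →* Matrix.unitaryGroup (Fin d) ℂ} (hirr : IsIrreducibleUnitaryRep ρ)
    (A : Matrix (Fin d) (Fin d) ℂ) :
    ∑ g, (ρ g : Matrix (Fin d) (Fin d) ℂ) * A * (ρ g⁻¹ : Matrix (Fin d) (Fin d) ℂ) =
      (Fintype.card G * A.trace / d) • 1 := by
  rcases Nat.eq_zero_or_pos d with rfl | hd
  · exact Subsingleton.elim _ _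
  set σ := (Matrix.unitaryGroup (Fin d) ℂ).subtype.comp ρ
  obtain ⟨c, hc⟩ := hirr.exists_eq_smul_one (σ.commute_sum_conj A)
  have htrace : (Fintype.card G : ℂ) * A.trace = c * d := by
    have := congrArg Matrix.trace hc
    simp only [Matrix.trace_sum, Matrix.trace_conj_monoidHom, sum_const, card_univ,
      nsmul_eq_mul, Matrix.trace_smul, Matrix.trace_one, Fintype.card_fin, smul_eq_mul] at this
    exact this
  change ∑ g, σ g * A * σ g⁻¹ = _
  rw [hc, htrace, mul_div_cancel_right₀ _ (by exact_mod_cast hd.ne')]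

/-- Schur orthogonality relations for the matrix entries of a single irreducible
unitary representation. -/
theorem schur_orthogonality_entries_self {G : Type*} [Group G] [Fintype G] {d : ℕ}
    (ρ : G →* Matrix.unitaryGroup (Fin d) ℂ) (hirr : IsIrreducibleUnitaryRep ρ)
    (i j i' j' : Fin d) :
    (1 / (Fintype.card G : ℂ)) *
      ∑ g : G, (ρ g : Matrix (Fin d) (Fin d) ℂ) i j *
        conj ((ρ g : Matrix (Fin d) (Fin d) ℂ) i' j') =
    if i = i' ∧ j = j' then 1 / (d : ℂ) else 0 := by
  have hcard : (Fintype.card G : ℂ) ≠ 0 := Nat.cast_ne_zero.mpr Fintype.card_ne_zero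
  have key := congrFun (congrFun (hirr.sum_conj_eq (Matrix.single j j' 1)) i) i'
  simp only [Matrix.sum_apply, map_inv, Matrix.UnitaryGroup.inv_val, Matrix.mul_single_mul_apply,
    mul_one, Matrix.star_apply, ← starRingEnd_apply, Matrix.smul_apply, Matrix.one_apply, smul_eq_mul] at key
  rw [key]
  rcases eq_or_ne j j' with rfl | hjj
  · by_cases hii : i = i' <;> simp [hii, Matrix.trace_single_eq_same]
    field_simp
  · simp [hjj, Matrix.trace_single_eq_of_ne]
end

section
/- Let G be a finite group, let α : G → ℂ be a class function (α(g g' g⁻¹) = α(g') for all g, g' ∈ G), and let A be the adjacency matrix of the Cayley color graph Γ(G; α), i.e. A(x, y) = α(y · x⁻¹). Let ρ : G → U(d) be an irreducible unitary representation with character χ. Then for every 1 ≤ i, j ≤ d, the vector v_{ij} ∈ ℂ^G defined by v_{ij}(g) = ρ(g)_{ij} satisfies A · v_{ij} = λ · v_{ij}, where λ = (1/d) · Σ_{g ∈ G} α(g) χ(g). -/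
/-!
Since `α` is a class function, `M = ∑ g, α g • ρ g` commutes with every `ρ h`, so by Schur's lemma
`M = c • 1`, and taking traces gives `c = (1/d) ∑ g, α g * χ g`. Substituting `y = g * x`,
`(A v_{ij}) x = ∑ g, α g * ρ(g * x)_{ij} = (M * ρ x)_{ij} = c * ρ(x)_{ij}`.
-/

open Matrix

theorem Matrix.exists_eq_smul_one_of_irreducible_of_commute {K n ι : Type*} [Field K]
    [IsAlgClosed K] [Fintype n] [DecidableEq n] [Nonempty n] (ρ : ι → Matrix n n K)
    (hirr : ∀ W : Submodule K (n → K), (∀ g, ∀ v ∈ W, ρ g *ᵥ v ∈ W) → W = ⊥ ∨ W = ⊤)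
    {M : Matrix n n K} (hM : ∀ g, Commute (ρ g) M) : ∃ c : K, M = c • 1 := by
  set f : Module.End K (n → K) := toLin' M with hf
  obtain ⟨c, hc⟩ := Module.End.exists_eigenvalue f
  obtain ⟨v, hv⟩ := hc.exists_hasEigenvector
  have hinv : ∀ g, ∀ w ∈ f.eigenspace c, ρ g *ᵥ w ∈ f.eigenspace c := by
    intro g w hw
    rw [Module.End.mem_eigenspace_iff, hf, toLin'_apply] at hw ⊢
    rw [mulVec_mulVec, ← (hM g).eq, ← mulVec_mulVec, hw, mulVec_smul]
  have htop : f.eigenspace c = ⊤ :=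
    (hirr _ hinv).resolve_left fun h => hv.2 (by simpa [h] using hv.1)
  rw [Module.End.eigenspace_def, LinearMap.ker_eq_top, sub_eq_zero] at htop
  exact ⟨c, toLin'.injective (by rw [← hf, htop, map_smul, toLin'_one]; rfl)⟩

theorem Matrix.eq_trace_div_card_smul_one_of_irreducible_of_commute {K n ι : Type*} [Field K]
    [IsAlgClosed K] [CharZero K] [Fintype n] [DecidableEq n] [Nonempty n] (ρ : ι → Matrix n n K)
    (hirr : ∀ W : Submodule K (n → K), (∀ g, ∀ v ∈ W, ρ g *ᵥ v ∈ W) → W = ⊥ ∨ W = ⊤)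
    {M : Matrix n n K} (hM : ∀ g, Commute (ρ g) M) : M = (M.trace / Fintype.card n) • 1 := by
  obtain ⟨c, rfl⟩ := exists_eq_smul_one_of_irreducible_of_commute ρ hirr hM
  rw [trace_smul, trace_one, smul_eq_mul, mul_div_cancel_right₀ _ (by simp)]

theorem commute_sum_smul_of_conj_invariant {G R A : Type*} [Group G] [Fintype G] [CommSemiring R]
    [Semiring A] [Algebra R A] (σ : G →* A) {α : G → R} (hα : ∀ g g' : G, α (g * g' * g⁻¹) = α g')
    (h : G) : Commute (σ h) (∑ g, α g • σ g) := by
  rw [Commute, SemiconjBy, Finset.mul_sum, Finset.sum_mul]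
  refine Fintype.sum_equiv ((Equiv.mulLeft h).trans (Equiv.mulRight h⁻¹)) _ _ fun g => ?_
  simp only [Equiv.trans_apply, Equiv.coe_mulLeft, Equiv.coe_mulRight, hα, mul_smul_comm,
    smul_mul_assoc, ← map_mul, inv_mul_cancel_right]

theorem cayley_adj_mulVec_coeff {G R n : Type*} [Group G] [Fintype G] [CommSemiring R]
    [Fintype n] [DecidableEq n] (σ : G →* Matrix n n R) (α : G → R) (i j : n) :
    (of fun x y : G => α (y * x⁻¹)) *ᵥ (fun g => σ g i j) =
      fun x => ((∑ g, α g • σ g) * σ x) i j := by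
  funext x
  rw [Finset.sum_mul, Matrix.sum_apply]
  refine Fintype.sum_equiv (Equiv.mulRight x⁻¹) _ _ fun y => ?_
  simp [← map_mul, mul_assoc]

/-- For a class function `α`, the matrix-entry functions `v_{i j}(g) = ρ(g)_{i j}` of an
irreducible unitary representation `ρ` with character `χ` are eigenvectors of the adjacency
matrix `A(x,y) = α (y * x⁻¹)` of the Cayley color graph `Γ(G; α)`, with eigenvalue
`λ = (1/d) ∑_g α(g) χ(g)`. -/
theorem cayley_adj_eigenvector_of_classFunction {G : Type*} [Group G] [Fintype G]
    (α : G → ℂ) (hα : ∀ g g' : G, α (g * g' * g⁻¹) = α g')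
    {d : ℕ} (ρ : G →* Matrix.unitaryGroup (Fin d) ℂ) (hirr : IsIrreducibleUnitaryRep ρ)
    (i j : Fin d) :
    (Matrix.of fun x y : G => α (y * x⁻¹)).mulVec
        (fun g : G => (ρ g : Matrix (Fin d) (Fin d) ℂ) i j) =
      ((1 / (d : ℂ)) * ∑ g : G, α g * Matrix.trace (ρ g : Matrix (Fin d) (Fin d) ℂ)) •
        (fun g : G => (ρ g : Matrix (Fin d) (Fin d) ℂ) i j) := by
  let σ : G →* Matrix (Fin d) (Fin d) ℂ := (unitaryGroup (Fin d) ℂ).subtype.comp ρ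
  have : Nonempty (Fin d) := ⟨i⟩
  have hscalar := eq_trace_div_card_smul_one_of_irreducible_of_commute (fun g => σ g) hirr
    (commute_sum_smul_of_conj_invariant σ hα)
  refine (cayley_adj_mulVec_coeff σ α i j).trans (funext fun x => ?_)
  rw [hscalar, trace_sum]
  simp [σ, trace_smul, div_eq_inv_mul]
end

section
/- Let G be a finite group of order n, and let ρ_1, …, ρ_r be pairwise non-isomorphic irreducible unitary representations of G of degrees d_1, …, d_r with d_1² + ⋯ + d_r² = n (a complete set of irreducible representations). Let α : G → ℂ be a class function and let A be the adjacency matrix of the Cayley color graph Γ(G; α), i.e. A(x, y) = α(y · x⁻¹). Then the characteristic polynomial of A equals ∏_{k=1}^{r} (X − λ_k)^{d_k²}, where λ_k = (1/d_k) · Σ_{g ∈ G} α(g) χ_k(g) and χ_k is the character of ρ_k. -/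
/-!
Let `P` be the `G × (Σ k, d_k × d_k)` matrix of matrix coefficients, `P x (k, i, j) = ρ_k(x)_{ij}`.
By the Schur orthogonality relations its columns are pairwise orthogonal, of squared length
`|G| / d_k`, so `P` is invertible (it is square by completeness). Since `α` is a class function,
`∑ g, α g • ρ_k g` commutes with `ρ_k`, hence is the scalar `λ_k` by Schur's lemma; reading this
column by column gives `A P = P D` with `D` diagonal, each `λ_k` occurring `d_k²` times.
-/

open Polynomial

/-- Two unitary matrix representations are isomorphic if there exists an invertible
intertwiner between them. -/
def UnitaryRepIso {G : Type*} [Group G] {d d' : ℕ}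
    (ρ : G →* Matrix.unitaryGroup (Fin d) ℂ)
    (ρ' : G →* Matrix.unitaryGroup (Fin d') ℂ) : Prop :=
  ∃ T : (Fin d' → ℂ) ≃ₗ[ℂ] (Fin d → ℂ),
    ∀ g : G, ∀ v : Fin d' → ℂ,
      (ρ g : Matrix (Fin d) (Fin d) ℂ).mulVec (T v) =
        T ((ρ' g : Matrix (Fin d') (Fin d') ℂ).mulVec v)

open Matrix

section Schur

variable {G : Type*} [Group G] {d d' : ℕ}

def UnitaryRepIntertwines (ρ : G →* unitaryGroup (Fin d) ℂ) (ρ' : G →* unitaryGroup (Fin d') ℂ)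
    (T : Matrix (Fin d) (Fin d') ℂ) : Prop :=
  ∀ g, (ρ g : Matrix (Fin d) (Fin d) ℂ) * T = T * (ρ' g : Matrix (Fin d') (Fin d') ℂ)

variable {ρ : G →* unitaryGroup (Fin d) ℂ} {ρ' : G →* unitaryGroup (Fin d') ℂ}
  {T : Matrix (Fin d) (Fin d') ℂ}

namespace IsIrreducibleUnitaryRep

theorem eq_zero_of_intertwines_of_ker_ne_bot (hρ' : IsIrreducibleUnitaryRep ρ')
    (hT : UnitaryRepIntertwines ρ ρ' T) (hker : LinearMap.ker (toLin' T) ≠ ⊥) : T = 0 := by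
  refine (hρ' _ fun g v hv => ?_).elim (absurd · hker) fun htop => ?_
  · rw [LinearMap.mem_ker, toLin'_apply] at hv ⊢
    rw [mulVec_mulVec, ← hT g, ← mulVec_mulVec, hv, mulVec_zero]
  · exact toLin'.map_eq_zero_iff.mp (LinearMap.ker_eq_top.mp htop)

theorem eq_zero_of_intertwines_of_range_ne_top (hρ : IsIrreducibleUnitaryRep ρ)
    (hT : UnitaryRepIntertwines ρ ρ' T) (hrange : LinearMap.range (toLin' T) ≠ ⊤) : T = 0 := by
  refine (hρ _ fun g v hv => ?_).elim (fun hbot => ?_) (absurd · hrange)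
  · obtain ⟨u, rfl⟩ := hv
    exact ⟨(ρ' g : Matrix (Fin d') (Fin d') ℂ) *ᵥ u, by simp [mulVec_mulVec, hT g]⟩
  · exact toLin'.map_eq_zero_iff.mp (LinearMap.range_eq_bot.mp hbot)

theorem eq_zero_of_intertwines (hρ : IsIrreducibleUnitaryRep ρ)
    (hρ' : IsIrreducibleUnitaryRep ρ') (hni : ¬ UnitaryRepIso ρ ρ')
    (hT : UnitaryRepIntertwines ρ ρ' T) : T = 0 := by
  by_contra hT0
  have hinj : LinearMap.ker (toLin' T) = ⊥ := by
    by_contra h; exact hT0 (hρ'.eq_zero_of_intertwines_of_ker_ne_bot hT h)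
  have hsurj : LinearMap.range (toLin' T) = ⊤ := by
    by_contra h; exact hT0 (hρ.eq_zero_of_intertwines_of_range_ne_top hT h)
  have hbij : Function.Bijective (toLin' T) :=
    ⟨LinearMap.ker_eq_bot.mp hinj, LinearMap.range_eq_top.mp hsurj⟩
  refine hni ⟨LinearEquiv.ofBijective (toLin' T) hbij, fun g v => ?_⟩
  simp only [LinearEquiv.ofBijective_apply, toLin'_apply, mulVec_mulVec, hT g]

theorem eq_smul_one_of_intertwines (hρ : IsIrreducibleUnitaryRep ρ)
    {T : Matrix (Fin d) (Fin d) ℂ} (hT : UnitaryRepIntertwines ρ ρ T) : T = (trace T / d) • 1 := by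
  obtain rfl | hd := d.eq_zero_or_pos
  · exact Subsingleton.elim _ _
  have : NeZero d := ⟨hd.ne'⟩
  obtain ⟨c, hc⟩ := Module.End.exists_eigenvalue (toLin' T)
  obtain ⟨v, hv⟩ := hc.exists_hasEigenvector
  have hTv : T *ᵥ v = c • v := hv.apply_eq_smul
  have hTc : T - c • 1 = 0 := by
    refine hρ.eq_zero_of_intertwines_of_ker_ne_bot (ρ := ρ) (fun g => ?_) fun hbot => hv.2 ?_
    · simp [mul_sub, sub_mul, hT g]
    · have hv_ker : v ∈ LinearMap.ker (toLin' (T - c • 1)) := by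
        simp [hTv]
      rwa [hbot, Submodule.mem_bot] at hv_ker
  rw [sub_eq_zero.mp hTc]
  simp [NeZero.ne (d : ℂ)]

end IsIrreducibleUnitaryRep

end Schur

section Orthogonality

variable {G : Type*} [Group G] [Fintype G] {d d' : ℕ}
  (ρ : G →* unitaryGroup (Fin d) ℂ) (ρ' : G →* unitaryGroup (Fin d') ℂ)

theorem unitaryRepIntertwines_sum_inv_mul_mul (E : Matrix (Fin d) (Fin d') ℂ) :
    UnitaryRepIntertwines ρ ρ'
      (∑ x, (ρ x⁻¹ : Matrix (Fin d) (Fin d) ℂ) * E * (ρ' x : Matrix (Fin d') (Fin d') ℂ)) := by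
  intro h
  rw [Matrix.mul_sum, Matrix.sum_mul]
  exact Fintype.sum_equiv (Equiv.mulRight h⁻¹) _ _ fun x => by simp [Matrix.mul_assoc]

theorem sum_star_apply_mul_apply_eq_apply_sum (i j : Fin d) (i' j' : Fin d') :
    ∑ x, star ((ρ x : Matrix (Fin d) (Fin d) ℂ) i j) * (ρ' x : Matrix (Fin d') (Fin d') ℂ) i' j' =
      (∑ x, (ρ x⁻¹ : Matrix (Fin d) (Fin d) ℂ) * single i i' (1 : ℂ) *
        (ρ' x : Matrix (Fin d') (Fin d') ℂ)) j j' := by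
  simp [Matrix.sum_apply, mul_apply, single_apply, ite_and, ← conjTranspose_apply]

noncomputable def centralCharacter (α : G → ℂ) : ℂ :=
  (1 / d : ℂ) * ∑ g, α g * trace (ρ g : Matrix (Fin d) (Fin d) ℂ)

variable {ρ ρ'}

namespace IsIrreducibleUnitaryRep

theorem sum_star_apply_mul_apply_of_not_iso (hρ : IsIrreducibleUnitaryRep ρ)
    (hρ' : IsIrreducibleUnitaryRep ρ') (hni : ¬ UnitaryRepIso ρ ρ')
    (i j : Fin d) (i' j' : Fin d') :
    ∑ x, star ((ρ x : Matrix (Fin d) (Fin d) ℂ) i j) * (ρ' x : Matrix (Fin d') (Fin d') ℂ) i' j' =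
      0 := by
  rw [sum_star_apply_mul_apply_eq_apply_sum,
    hρ.eq_zero_of_intertwines hρ' hni (unitaryRepIntertwines_sum_inv_mul_mul ρ ρ' _),
    Matrix.zero_apply]

theorem sum_star_apply_mul_apply_self (hρ : IsIrreducibleUnitaryRep ρ) (i j i' j' : Fin d) :
    ∑ x, star ((ρ x : Matrix (Fin d) (Fin d) ℂ) i j) * (ρ x : Matrix (Fin d) (Fin d) ℂ) i' j' =
      if i = i' ∧ j = j' then (Fintype.card G : ℂ) / d else 0 := by
  have htrace : ∀ x, trace ((ρ x⁻¹ : Matrix (Fin d) (Fin d) ℂ) * single i i' (1 : ℂ) *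
      (ρ x : Matrix (Fin d) (Fin d) ℂ)) = if i = i' then 1 else 0 := fun x => by
    rw [trace_mul_cycle]
    split_ifs with h
    · simp [h, trace_single_eq_same]
    · simp [trace_single_eq_of_ne (h := h)]
  rw [sum_star_apply_mul_apply_eq_apply_sum,
    hρ.eq_smul_one_of_intertwines (unitaryRepIntertwines_sum_inv_mul_mul ρ ρ _), trace_sum,
    Finset.sum_congr rfl fun x _ => htrace x]
  simp only [Matrix.smul_apply, one_apply, Finset.sum_ite_irrel, Finset.sum_const_zero,
    smul_eq_mul]
  split_ifs <;> simp_all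

theorem sum_smul_eq_centralCharacter_smul_one (hρ : IsIrreducibleUnitaryRep ρ) {α : G → ℂ}
    (hα : ∀ g g', α (g * g' * g⁻¹) = α g') :
    ∑ g, α g • (ρ g : Matrix (Fin d) (Fin d) ℂ) = centralCharacter ρ α • 1 := by
  have hcomm : UnitaryRepIntertwines ρ ρ (∑ g, α g • (ρ g : Matrix (Fin d) (Fin d) ℂ)) := by
    intro h
    rw [Matrix.mul_sum, Matrix.sum_mul]
    exact Fintype.sum_equiv ((Equiv.mulLeft h).trans (Equiv.mulRight h⁻¹)) _ _ fun g => by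
      rw [Equiv.trans_apply, Equiv.coe_mulLeft, Equiv.coe_mulRight, hα]
      simp [Matrix.mul_assoc]
  rw [hρ.eq_smul_one_of_intertwines hcomm, trace_sum]
  simp [centralCharacter, trace_smul, div_eq_inv_mul]

end IsIrreducibleUnitaryRep

end Orthogonality

theorem Matrix.charpoly_eq_of_mul_eq_mul {R m n : Type*} [CommRing R] [Fintype m] [Fintype n]
    [DecidableEq m] [DecidableEq n] (hmn : Fintype.card m = Fintype.card n)
    {A : Matrix m m R} {D : Matrix n n R} {P : Matrix m n R} {L : Matrix n m R}
    (hLP : L * P = 1) (hAP : A * P = P * D) : A.charpoly = D.charpoly := by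
  have hPL : P * L = 1 := (mul_eq_one_comm_of_card_eq _ _ _ hmn.symm).mp hLP
  have hA : A = P * (D * L) := by
    rw [← Matrix.mul_assoc, ← hAP, Matrix.mul_assoc, hPL, Matrix.mul_one]
  have hD : D = D * L * P := by rw [Matrix.mul_assoc, hLP, Matrix.mul_one]
  rw [hA, charpoly_mul_comm_of_le _ _ hmn.ge, hmn, Nat.sub_self, pow_zero, one_mul, ← hD]

theorem Fintype.prod_sigma_fst {ι M : Type*} [CommMonoid M] [Fintype ι] {κ : ι → Type*}
    [∀ k, Fintype (κ k)] (f : ι → M) :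
    ∏ σ : Σ k, κ k, f σ.1 = ∏ k, f k ^ Fintype.card (κ k) := by
  simp [Fintype.prod_sigma]

section MatrixCoefficients

variable {G : Type*} [Group G] [Fintype G] {ι : Type*} [DecidableEq ι] {d : ι → ℕ}
  (ρ : (k : ι) → G →* unitaryGroup (Fin (d k)) ℂ)

def matrixCoefficients : Matrix G (Σ k, Fin (d k) × Fin (d k)) ℂ :=
  of fun x σ => (ρ σ.1 x : Matrix (Fin (d σ.1)) (Fin (d σ.1)) ℂ) σ.2.1 σ.2.2

variable {ρ}

theorem cayley_mul_matrixCoefficients [Fintype ι] (hirr : ∀ k, IsIrreducibleUnitaryRep (ρ k))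
    {α : G → ℂ} (hα : ∀ g g', α (g * g' * g⁻¹) = α g') :
    (of fun x y : G => α (y * x⁻¹) : Matrix G G ℂ) * matrixCoefficients ρ =
      matrixCoefficients ρ *
        diagonal fun σ : Σ k, Fin (d k) × Fin (d k) => centralCharacter (ρ σ.1) α := by
  have hcentral (k : ι) (x : G) (i j : Fin (d k)) :
      ∑ w, α w * (ρ k (w * x) : Matrix (Fin (d k)) (Fin (d k)) ℂ) i j =
        (ρ k x : Matrix (Fin (d k)) (Fin (d k)) ℂ) i j * centralCharacter (ρ k) α := by
    have hscalar := congr_arg (fun M : Matrix (Fin (d k)) (Fin (d k)) ℂ => (M * ρ k x) i j)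
      ((hirr k).sum_smul_eq_centralCharacter_smul_one hα)
    simpa [Matrix.sum_mul, Matrix.sum_apply, mul_comm] using hscalar
  ext x ⟨k, i, j⟩
  rw [mul_diagonal, mul_apply]
  simp only [of_apply, matrixCoefficients]
  rw [← hcentral]
  exact Fintype.sum_equiv (Equiv.mulRight x⁻¹) _ _ fun z => by simp

theorem conjTranspose_matrixCoefficients_mul_self
    (hirr : ∀ k, IsIrreducibleUnitaryRep (ρ k))
    (hnoniso : Pairwise fun k k' => ¬ UnitaryRepIso (ρ k) (ρ k')) :
    (matrixCoefficients ρ)ᴴ * matrixCoefficients ρ =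
      diagonal fun σ : Σ k, Fin (d k) × Fin (d k) => (Fintype.card G : ℂ) / d σ.1 := by
  ext ⟨k, i, j⟩ ⟨k', i', j'⟩
  simp only [mul_apply, conjTranspose_apply, matrixCoefficients, of_apply]
  by_cases hk : k = k'
  · subst hk
    rw [(hirr k).sum_star_apply_mul_apply_self]
    simp [diagonal_apply]
  · rw [(hirr k).sum_star_apply_mul_apply_of_not_iso (hirr k') (hnoniso hk), diagonal_apply,
      if_neg fun h => hk (congr_arg Sigma.fst h)]

theorem exists_mul_matrixCoefficients_eq_one [Fintype ι]
    (hirr : ∀ k, IsIrreducibleUnitaryRep (ρ k))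
    (hnoniso : Pairwise fun k k' => ¬ UnitaryRepIso (ρ k) (ρ k')) :
    ∃ L : Matrix (Σ k, Fin (d k) × Fin (d k)) G ℂ, L * matrixCoefficients ρ = 1 := by
  refine ⟨diagonal (fun σ : Σ k, Fin (d k) × Fin (d k) => (d σ.1 : ℂ) / Fintype.card G) *
    (matrixCoefficients ρ)ᴴ, ?_⟩
  rw [Matrix.mul_assoc (diagonal _), conjTranspose_matrixCoefficients_mul_self hirr hnoniso,
    diagonal_mul_diagonal, ← diagonal_one]
  congr 1
  ext ⟨k, i, _⟩
  have : (d k : ℂ) ≠ 0 := Nat.cast_ne_zero.mpr i.pos.ne'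
  field_simp

end MatrixCoefficients

/-- For a class function `α` on a finite group `G` of order `n` and a complete set
`ρ_1, …, ρ_r` of pairwise non-isomorphic irreducible unitary representations of degrees
`d_1, …, d_r` (so `d_1² + ⋯ + d_r² = n`), the characteristic polynomial of the adjacency
matrix `A(x,y) = α (y * x⁻¹)` of the Cayley color graph `Γ(G; α)` is
`∏_k (X - λ_k)^{d_k²}`, where `λ_k = (1/d_k) ∑_g α(g) χ_k(g)`. -/
theorem cayley_adj_charpoly_of_classFunction {G : Type*} [Group G] [Fintype G] [DecidableEq G]
    {r : ℕ} (d : Fin r → ℕ)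
    (ρ : (k : Fin r) → G →* Matrix.unitaryGroup (Fin (d k)) ℂ)
    (hirr : ∀ k, IsIrreducibleUnitaryRep (ρ k))
    (hnoniso : ∀ k k' : Fin r, k ≠ k' → ¬ UnitaryRepIso (ρ k) (ρ k'))
    (hcomplete : ∑ k : Fin r, (d k) ^ 2 = Fintype.card G)
    (α : G → ℂ) (hα : ∀ g g' : G, α (g * g' * g⁻¹) = α g') :
    (Matrix.of fun x y : G => α (y * x⁻¹)).charpoly =
      ∏ k : Fin r,
        (X - C ((1 / (d k : ℂ)) *
            ∑ g : G, α g * Matrix.trace (ρ k g : Matrix (Fin (d k)) (Fin (d k)) ℂ))) ^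
          ((d k) ^ 2) := by
  have hcard : Fintype.card G = Fintype.card (Σ k, Fin (d k) × Fin (d k)) := by
    simp [← hcomplete, sq]
  obtain ⟨L, hL⟩ := exists_mul_matrixCoefficients_eq_one hirr hnoniso
  rw [charpoly_eq_of_mul_eq_mul hcard hL (cayley_mul_matrixCoefficients hirr hα),
    charpoly_diagonal, Fintype.prod_sigma_fst fun k => X - C (centralCharacter (ρ k) α)]
  simp [centralCharacter, sq]
end

section
/- Let K and H be finite groups, φ : H →* Aut(K), and let G = K ⋊_φ H, with canonical embeddings inl : K → G and inr : H → G. Suppose α : G → ℂ satisfies (C1) α(inr(h) · g · inl(k) · g⁻¹) = α(inr(h) · inl(k)) for all g ∈ G, k ∈ K, h ∈ H, and (C2) α(inr(h' h h'⁻¹) · inl(k)) = α(inr(h) · inl(k)) for all h, h' ∈ H, k ∈ K. Let A be the adjacency matrix of the Cayley color graph Γ(G; α), i.e. A(x, y) = α(y · x⁻¹). Let ρ^H : H → U(d_H) and ρ^K : K → U(d_K) be irreducible unitary representations with characters χ^H and χ^K. For 1 ≤ i, j ≤ d_H and 1 ≤ i', j' ≤ d_K, let v ∈ ℂ^G be the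 vector determined by v(inr(h) · inl(k)) = ρ^H(h)_{ij} · ρ^K(k)_{i'j'} for all h ∈ H, k ∈ K. Then A · v = Λ · v, where Λ = (1/(d_H d_K)) · Σ_{h ∈ H} Σ_{k ∈ K} α(inr(h) · inl(k)) χ^H(h) χ^K(k). (By (C2), Λ equals the paper's formula (1/(d_H d_K)) Σ_C |C| χ^H(h_C) Σ_{k ∈ K} α(inr(h_C) · inl(k)) χ^K(k), summing over the conjugacy classes C of H with representatives h_C.) -/
/-!
Write `x = inr h₀ * inl k₀` and `σ h k = ρᴴ(h) ⊗ ρᴷ(k)`, so that `v (inr h * inl k)` is the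
`((i, i'), (j, j'))` entry of `σ h k`. Condition (C1) with `g = inr h₀` reindexes
`(A v)(x) = ∑ h k, α (inr h * inl k) v (inr (h * h₀) * inl (k * k₀))`, which is that entry of
`(∑ h k, α (inr h * inl k) • σ h k) * σ h₀ k₀`. The first factor is scalar by Schur's lemma applied
twice: (C1) with `g = inl k₀` makes `k ↦ α (inr h * inl k)` a class function on `K`, so
`∑ k, α (inr h * inl k) • ρᴷ(k)` is a scalar `c h`, and `c` is a class function on `H` by (C2).
-/

open SemidirectProduct

instance SemidirectProduct.instFintype {K H : Type*} [Group K] [Group H] {φ : H →* MulAut K}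
    [Fintype K] [Fintype H] : Fintype (K ⋊[φ] H) :=
  Fintype.ofEquiv (K × H)
    { toFun := fun p => ⟨p.1, p.2⟩
      invFun := fun g => (g.left, g.right)
      left_inv := fun _ => rfl
      right_inv := fun _ => rfl }

open Matrix
open scoped Kronecker

namespace Matrix

variable {ι l m n p α : Type*} [NonUnitalNonAssocSemiring α]

theorem kronecker_sum (A : Matrix l m α) (s : Finset ι) (B : ι → Matrix n p α) :
    A ⊗ₖ ∑ i ∈ s, B i = ∑ i ∈ s, A ⊗ₖ B i := by
  ext ⟨_, _⟩ ⟨_, _⟩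
  simp [sum_apply, Finset.mul_sum]

theorem sum_kronecker (s : Finset ι) (A : ι → Matrix l m α) (B : Matrix n p α) :
    (∑ i ∈ s, A i) ⊗ₖ B = ∑ i ∈ s, A i ⊗ₖ B := by
  ext ⟨_, _⟩ ⟨_, _⟩
  simp [sum_apply, Finset.sum_mul]

end Matrix

namespace IsIrreducibleUnitaryRep

variable {G : Type*} [Group G] {d : ℕ} {ρ : G →* unitaryGroup (Fin d) ℂ}

theorem exists_eq_smul_one_of_commute [NeZero d] (hρ : IsIrreducibleUnitaryRep ρ)
    {N : Matrix (Fin d) (Fin d) ℂ} (hN : ∀ g, Commute (ρ g : Matrix (Fin d) (Fin d) ℂ) N) :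
    ∃ μ : ℂ, N = μ • 1 := by
  obtain ⟨μ, hμ⟩ := Module.End.exists_eigenvalue N.mulVecLin
  have hinv : ∀ g, ∀ w ∈ Module.End.eigenspace N.mulVecLin μ,
      (ρ g : Matrix (Fin d) (Fin d) ℂ) *ᵥ w ∈ Module.End.eigenspace N.mulVecLin μ := by
    intro g w hw
    rw [Module.End.mem_eigenspace_iff, mulVecLin_apply] at hw ⊢
    rw [mulVec_mulVec, ← (hN g).eq, ← mulVec_mulVec, hw, mulVec_smul]
  have htop := (hρ _ hinv).resolve_left hμ
  refine ⟨μ, Matrix.toLin'.injective (LinearMap.ext fun w => ?_)⟩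
  have hw : w ∈ Module.End.eigenspace N.mulVecLin μ := htop ▸ Submodule.mem_top
  rw [Module.End.mem_eigenspace_iff, mulVecLin_apply] at hw
  simpa [smul_mulVec] using hw

theorem eq_trace_div_smul_one_of_commute (hρ : IsIrreducibleUnitaryRep ρ)
    {N : Matrix (Fin d) (Fin d) ℂ} (hN : ∀ g, Commute (ρ g : Matrix (Fin d) (Fin d) ℂ) N) :
    N = (N.trace / d) • 1 := by
  rcases eq_zero_or_neZero d with rfl | _
  · exact Subsingleton.elim _ _
  obtain ⟨μ, rfl⟩ := hρ.exists_eq_smul_one_of_commute hN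
  simp [trace_smul, NeZero.ne]

theorem sum_smul_eq_smul_one [Fintype G] (hρ : IsIrreducibleUnitaryRep ρ) {f : G → ℂ}
    (hf : ∀ g x, f (g * x * g⁻¹) = f x) :
    ∑ x, f x • (ρ x : Matrix (Fin d) (Fin d) ℂ) =
      ((∑ x, f x * (ρ x : Matrix (Fin d) (Fin d) ℂ).trace) / d) • 1 := by
  refine (hρ.eq_trace_div_smul_one_of_commute fun g => ?_).trans ?_
  · simp only [Commute, SemiconjBy, Finset.mul_sum, Finset.sum_mul, smul_mul, mul_smul_comm]
    refine Fintype.sum_equiv (MulAut.conj g).toEquiv _ _ fun x => ?_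
    simp only [MulEquiv.toEquiv_eq_coe, MulEquiv.coe_toEquiv, MulAut.conj_apply, hf]
    rw [← Submonoid.coe_mul, ← Submonoid.coe_mul, ← map_mul, ← map_mul, inv_mul_cancel_right]
  · simp [trace_sum, trace_smul]

end IsIrreducibleUnitaryRep

theorem IsIrreducibleUnitaryRep.sum_sum_smul_kronecker_eq_smul_one {H K : Type*} [Group H]
    [Group K] [Fintype H] [Fintype K] {dH dK : ℕ} {ρH : H →* unitaryGroup (Fin dH) ℂ}
    {ρK : K →* unitaryGroup (Fin dK) ℂ} (hρH : IsIrreducibleUnitaryRep ρH)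
    (hρK : IsIrreducibleUnitaryRep ρK) {a : H → K → ℂ}
    (haH : ∀ h₀ h k, a (h₀ * h * h₀⁻¹) k = a h k) (haK : ∀ h k₀ k, a h (k₀ * k * k₀⁻¹) = a h k) :
    ∑ h, ∑ k, a h k • ((ρH h : Matrix (Fin dH) (Fin dH) ℂ) ⊗ₖ (ρK k : Matrix (Fin dK) (Fin dK) ℂ)) =
      ((∑ h, ∑ k, a h k * (ρH h : Matrix (Fin dH) (Fin dH) ℂ).trace *
        (ρK k : Matrix (Fin dK) (Fin dK) ℂ).trace) / (dH * dK)) • 1 := by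
  set c : H → ℂ := fun h => (∑ k, a h k * (ρK k : Matrix (Fin dK) (Fin dK) ℂ).trace) / dK
  have hK : ∀ h, ∑ k, a h k • (ρK k : Matrix (Fin dK) (Fin dK) ℂ) = c h • 1 :=
    fun h => hρK.sum_smul_eq_smul_one (haK h)
  have hH : ∑ h, c h • (ρH h : Matrix (Fin dH) (Fin dH) ℂ) =
      ((∑ h, c h * (ρH h : Matrix (Fin dH) (Fin dH) ℂ).trace) / dH) • 1 :=
    hρH.sum_smul_eq_smul_one fun h₀ h => by simp only [c, haH]
  calc _ = ∑ h, (ρH h : Matrix (Fin dH) (Fin dH) ℂ) ⊗ₖ ∑ k, a h k • (ρK k : Matrix _ _ ℂ) := by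
        simp only [kronecker_sum, kronecker_smul]
    _ = (∑ h, c h • (ρH h : Matrix (Fin dH) (Fin dH) ℂ)) ⊗ₖ (1 : Matrix (Fin dK) (Fin dK) ℂ) := by
        simp only [hK, sum_kronecker, kronecker_smul, smul_kronecker]
    _ = _ := by
        rw [hH, smul_kronecker, one_kronecker_one]
        congr 1
        simp only [c, Finset.sum_div, Finset.sum_mul, div_mul_eq_mul_div, div_div]
        congr! 2
        ring

namespace SemidirectProduct

variable {K H : Type*} [Group K] [Group H] {φ : H →* MulAut K}

variable (φ) in
def inrMulInlEquiv : H × K ≃ K ⋊[φ] H where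
  toFun p := inr p.1 * inl p.2
  invFun g := (g.right, (φ g.right)⁻¹ g.left)
  left_inv p := by ext <;> simp
  right_inv g := by ext <;> simp

variable [Fintype K] [Fintype H]

theorem sum_eq_sum_inr_mul_inl {M : Type*} [AddCommMonoid M] (F : K ⋊[φ] H → M) :
    ∑ g, F g = ∑ h, ∑ k, F (inr h * inl k) := by
  rw [← (inrMulInlEquiv φ).sum_comp, Fintype.sum_prod_type]
  rfl

theorem sum_mul_inv_inr_mul_inl {α : K ⋊[φ] H → ℂ}
    (hα : ∀ (g : K ⋊[φ] H) (k : K) (h : H), α (inr h * g * inl k * g⁻¹) = α (inr h * inl k))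
    (F : K ⋊[φ] H → ℂ) (h₀ : H) (k₀ : K) :
    ∑ g, α (g * (inr h₀ * inl k₀)⁻¹) * F g =
      ∑ h, ∑ k, α (inr h * inl k) * F (inr (h * h₀) * inl (k * k₀)) := by
  rw [sum_eq_sum_inr_mul_inl]
  refine Fintype.sum_equiv (Equiv.mulRight h₀⁻¹) _ _ fun h => ?_
  refine Fintype.sum_equiv (Equiv.mulRight k₀⁻¹) _ _ fun k => ?_
  have : (inr h * inl k * (inr h₀ * inl k₀)⁻¹ : K ⋊[φ] H) =
      inr (h * h₀⁻¹) * inr h₀ * inl (k * k₀⁻¹) * (inr h₀)⁻¹ := by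
    simp only [map_mul, map_inv]
    group
  simp only [Equiv.coe_mulRight, inv_mul_cancel_right]
  rw [this, hα]

end SemidirectProduct

/-- Theorem 3.1 of the paper (eigenvector form): for `G = K ⋊[φ] H` and `α` satisfying
conditions (C1) and (C2), the vector `v` determined by
`v(inr h * inl k) = ρᴴ(h)_{i j} · ρᴷ(k)_{i' j'}` is an eigenvector of the adjacency matrix
`A(x,y) = α (y * x⁻¹)` of `Γ(G; α)`, with eigenvalue
`Λ = (1/(d_H d_K)) ∑_{h ∈ H} ∑_{k ∈ K} α(inr h * inl k) χᴴ(h) χᴷ(k)`. -/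
theorem semidirect_cayley_adj_eigenvector {K H : Type*} [Group K] [Group H]
    [Fintype K] [Fintype H] (φ : H →* MulAut K) (α : K ⋊[φ] H → ℂ)
    (hC1 : ∀ (g : K ⋊[φ] H) (k : K) (h : H),
      α (inr h * g * inl k * g⁻¹) = α (inr h * inl k))
    (hC2 : ∀ (h h' : H) (k : K),
      α (inr (h' * h * h'⁻¹) * inl k) = α (inr h * inl k))
    {dH dK : ℕ}
    (ρH : H →* Matrix.unitaryGroup (Fin dH) ℂ) (hirrH : IsIrreducibleUnitaryRep ρH)
    (ρK : K →* Matrix.unitaryGroup (Fin dK) ℂ) (hirrK : IsIrreducibleUnitaryRep ρK)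
    (i j : Fin dH) (i' j' : Fin dK)
    (v : K ⋊[φ] H → ℂ)
    (hv : ∀ (h : H) (k : K),
      v (inr h * inl k) =
        (ρH h : Matrix (Fin dH) (Fin dH) ℂ) i j * (ρK k : Matrix (Fin dK) (Fin dK) ℂ) i' j') :
    (Matrix.of fun x y : K ⋊[φ] H => α (y * x⁻¹)).mulVec v =
      ((1 / ((dH : ℂ) * (dK : ℂ))) *
          ∑ h : H, ∑ k : K, α (inr h * inl k) *
            Matrix.trace (ρH h : Matrix (Fin dH) (Fin dH) ℂ) *
            Matrix.trace (ρK k : Matrix (Fin dK) (Fin dK) ℂ)) • v := by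
  have hα_inl_conj : ∀ h k₀ k, α (inr h * inl (k₀ * k * k₀⁻¹)) = α (inr h * inl k) :=
    fun h k₀ k => by
      simpa [mul_assoc] using hC1 (inl k₀) k h
  have hΛ := hirrH.sum_sum_smul_kronecker_eq_smul_one hirrK (a := fun h k => α (inr h * inl k))
    (fun h₀ h k => hC2 h h₀ k) hα_inl_conj
  set σ : H → K → Matrix (Fin dH × Fin dK) (Fin dH × Fin dK) ℂ := fun h k =>
    (ρH h : Matrix (Fin dH) (Fin dH) ℂ) ⊗ₖ (ρK k : Matrix (Fin dK) (Fin dK) ℂ)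
  have hσ : ∀ h₁ h₂ k₁ k₂, σ (h₁ * h₂) (k₁ * k₂) = σ h₁ k₁ * σ h₂ k₂ := fun _ _ _ _ => by
    simp only [σ, map_mul, Submonoid.coe_mul, mul_kronecker_mul]
  have hv' : ∀ h k, v (inr h * inl k) = σ h k (i, i') (j, j') := hv
  ext x
  obtain ⟨⟨h₀, k₀⟩, rfl⟩ := (inrMulInlEquiv φ).surjective x
  calc _ = ∑ h, ∑ k, α (inr h * inl k) * v (inr (h * h₀) * inl (k * k₀)) :=
        sum_mul_inv_inr_mul_inl hC1 v h₀ k₀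
    _ = ((∑ h, ∑ k, α (inr h * inl k) • σ h k) * σ h₀ k₀) (i, i') (j, j') := by
        simp only [hv', hσ, Matrix.sum_mul, Matrix.sum_apply, Matrix.smul_mul,
          Matrix.smul_apply, smul_eq_mul]
    _ = _ := by
        rw [hΛ]
        simp [hv', inrMulInlEquiv, div_eq_inv_mul]
end

section
/- Let m, l ≥ 1, let C_m and C_l be cyclic groups of orders m and l with generators k and h respectively, let φ : C_l →* Aut(C_m) be a homomorphism, and let G = C_m ⋊_φ C_l be the split metacyclic group, with embeddings inl : C_m → G and inr : C_l → G; write k for inl(k) and h for inr(h), so every element of G is uniquely h^t k^s with 0 ≤ t < l, 0 ≤ s < m. Let S ⊆ G be of the form S = S_0 ∪ h S_1 ∪ h² S_2 ∪ ⋯ ∪ h^{l−1} S_{l−1} where each S_t ⊆ C_m (identified with inl(C_m)) and h S_t h⁻¹ ⊆ S_t for 0 ≤ t ≤ l−1. Let A be the adjacency matrix of the Cayley graph Γ(G, S), i.e. A(x, y) = 1 if y · x⁻¹ ∈ S and 0 otherwise. Then for every 0 ≤ u ≤ l−1 and 0 ≤ v ≤ m−1, the vector w ∈ ℂ^G defined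 by w(h^t k^s) = e^{2πi u t / l} · e^{2πi v s / m} is an eigenvector of A with eigenvalue Σ_{t=0}^{l−1} e^{2πi u t / l} · (Σ_{s : k^s ∈ S_t} e^{2πi v s / m}). -/
open SemidirectProduct

/-!
On the normal forms `h^t k^s`, the vector `w` is `ψ(h^t) χ(k^s)` for characters `ψ` of `C_l`
and `χ` of `C_m`. For `g = h^t a` with `a ∈ S_t`, writing `x = h^p c` gives
`g x = h^(t+p) φ(h^p)⁻¹(a) c`, hence `w(g x) = ψ(h)^t χ(φ(h^p)⁻¹ a) w(x)`.
Since `φ(h)` maps the finite set `S_t` into itself, it permutes it, and so does every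
`φ(h^p)⁻¹`; thus `∑_{a ∈ S_t} χ(φ(h^p)⁻¹ a) = ∑_{a ∈ S_t} χ(a)`, independently of
`x`.
-/

open Finset
open scoped Pointwise

lemma Complex.exp_mul_natCast_div (z : ℂ) (t l : ℕ) :
    Complex.exp (z * t / l) = Complex.exp (z / l) ^ t := by
  rw [← Complex.exp_nat_mul]
  ring_nf

lemma Complex.exp_two_pi_mul_I_mul_natCast_div_pow_self (u : ℕ) {l : ℕ} (hl : l ≠ 0) :
    Complex.exp (2 * Real.pi * Complex.I * u / l) ^ l = 1 := by
  rw [← Complex.exp_nat_mul, mul_div_cancel₀ _ (Nat.cast_ne_zero.mpr hl), mul_comm]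
  exact_mod_cast Complex.exp_nat_mul_two_pi_mul_I u

section Cyclic

variable {G : Type*} [Group G] {g : G}

lemma exists_monoidHom_apply_eq_of_pow_orderOf_eq_one [Finite G] {M : Type*} [Monoid M]
    (hg : ∀ x, x ∈ Subgroup.zpowers g) {ζ : M} (hζ : ζ ^ orderOf g = 1) :
    ∃ χ : G →* M, χ g = ζ := by
  let u := Units.ofPowEqOne ζ _ hζ (orderOf_pos g).ne'
  refine ⟨(Units.coeHom M).comp (monoidHomOfForallMemZpowers hg
    (orderOf_dvd_of_pow_eq_one (Units.pow_ofPowEqOne hζ _) : orderOf u ∣ _)), ?_⟩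
  simp [monoidHomOfForallMemZpowers_apply_gen, u]

lemma sum_filter_range_orderOf_pow_mem [Fintype G] [DecidableEq G] {M : Type*}
    [AddCommMonoid M] (hg : ∀ x, x ∈ Subgroup.zpowers g) (s : Finset G) (f : G → M) :
    ∑ i ∈ (range (orderOf g)).filter (fun i => g ^ i ∈ s), f (g ^ i) = ∑ x ∈ s, f x := by
  rw [sum_filter, ← sum_image (f := fun x => if x ∈ s then f x else 0)
    (by simpa only [coe_range] using pow_injOn_Iio_orderOf),
    IsCyclic.image_range_orderOf hg, sum_ite_mem, univ_inter]

end Cyclic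

lemma MonoidHom.smul_finset_eq_of_forall_mem_zpowers {G H α : Type*} [Group G] [Group H]
    [MulAction G α] [DecidableEq α] {h : H} (hh : ∀ x, x ∈ Subgroup.zpowers h) (φ : H →* G)
    {s : Finset α} (hs : ∀ a ∈ s, φ h • a ∈ s) (r : H) : φ r • s = s :=
  have hmem : h ∈ (MulAction.stabilizer G s).comap φ :=
    MulAction.mem_stabilizer_finset_iff_smul_finset_subset.mpr (image_subset_iff.mpr hs)
  MulAction.mem_stabilizer_iff.mp (Subgroup.zpowers_le.mpr hmem (hh r))

lemma Matrix.of_indicator_mul_inv_mulVec_apply {G R : Type*} [Group G] [Fintype G]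
    [NonAssocSemiring R] (T : Finset G) (w : G → R) (x : G) :
    (Matrix.of fun x y : G => (T : Set G).indicator (fun _ => (1 : R)) (y * x⁻¹)).mulVec w x =
      ∑ g ∈ T, w (g * x) := by
  simp only [mulVec, dotProduct, of_apply]
  rw [← Equiv.sum_comp (Equiv.mulRight x)]
  simp only [Equiv.coe_mulRight, mul_inv_cancel_right]
  rw [← sum_indicator_subset _ (subset_univ T)]
  refine sum_congr rfl fun g _ => ?_
  by_cases hg : g ∈ T <;> simp [hg]

namespace SemidirectProduct

variable {K H : Type*} [Group K] [Group H] {φ : H →* MulAut K}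

lemma inr_right_mul_inl (x : K ⋊[φ] H) : inr x.right * inl ((φ x.right)⁻¹ x.left) = x := by
  ext <;> simp

lemma inr_mul_inl_mul_inr_mul_inl (b r : H) (a c : K) :
    (inr b * inl a * (inr r * inl c) : K ⋊[φ] H) = inr (b * r) * inl ((φ r)⁻¹ a * c) := by
  rw [map_mul, map_mul, inl_aut_inv, map_inv]
  group

variable (φ) in
noncomputable def unionInrPowMulInl [DecidableEq (K ⋊[φ] H)] (h : H)
    (St : Fin (orderOf h) → Finset K) : Finset (K ⋊[φ] H) :=
  univ.biUnion fun t => (St t).image fun a => inr h ^ (t : ℕ) * inl a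

lemma sum_unionInrPowMulInl {M : Type*} [AddCommMonoid M] [DecidableEq (K ⋊[φ] H)]
    (h : H) (St : Fin (orderOf h) → Finset K) (F : K ⋊[φ] H → M) :
    ∑ g ∈ unionInrPowMulInl φ h St, F g =
      ∑ t : Fin (orderOf h), ∑ a ∈ St t, F (inr h ^ (t : ℕ) * inl a) := by
  have hdisj : (↑(univ : Finset (Fin (orderOf h))) : Set _).PairwiseDisjoint
      (fun t => (St t).image fun a => (inr h ^ (t : ℕ) * inl a : K ⋊[φ] H)) := by
    intro t _ t' _ hne
    refine disjoint_left.mpr fun g hg hg' => hne ?_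
    obtain ⟨a, -, rfl⟩ := mem_image.mp hg
    obtain ⟨a', -, hg'⟩ := mem_image.mp hg'
    have hright := congrArg right hg'
    simp only [← map_pow, mul_right, right_inr, right_inl, mul_one] at hright
    exact Fin.ext (pow_injOn_Iio_orderOf t'.isLt t.isLt hright).symm
  rw [unionInrPowMulInl, sum_biUnion hdisj]
  refine sum_congr rfl fun t _ => sum_image fun a _ a' _ ha => ?_
  exact inl_injective (mul_left_cancel ha)

variable {R : Type*} [CommSemiring R] {χ : K →* R} {ψ : H →* R} {f : K ⋊[φ] H → R}

lemma apply_inr_mul_inl_mul (hf : ∀ b a, f (inr b * inl a) = ψ b * χ a) (b r : H) (a c : K) :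
    f (inr b * inl a * (inr r * inl c)) = ψ b * χ ((φ r)⁻¹ a) * f (inr r * inl c) := by
  rw [inr_mul_inl_mul_inr_mul_inl, hf, hf, map_mul, map_mul]
  ring

lemma sum_apply_inr_mul_inl_mul [DecidableEq K] (hf : ∀ b a, f (inr b * inl a) = ψ b * χ a)
    {s : Finset K} (hs : ∀ r, φ r • s = s) (b : H) (x : K ⋊[φ] H) :
    ∑ a ∈ s, f (inr b * inl a * x) = ψ b * (∑ a ∈ s, χ a) * f x := by
  obtain ⟨r, c, rfl⟩ : ∃ r c, x = inr r * inl c := ⟨_, _, (inr_right_mul_inl x).symm⟩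
  simp_rw [apply_inr_mul_inl_mul hf]
  rw [← sum_mul, ← mul_sum]
  congr 2
  conv_rhs => rw [← hs r⁻¹, smul_finset_def, sum_image (MulAction.injective _).injOn]
  simp [MulAut.smul_def]

lemma sum_unionInrPowMulInl_apply_mul [DecidableEq K] [DecidableEq (K ⋊[φ] H)]
    (hf : ∀ b a, f (inr b * inl a) = ψ b * χ a) (h : H) (St : Fin (orderOf h) → Finset K)
    (hSt : ∀ t r, φ r • St t = St t) (x : K ⋊[φ] H) :
    ∑ g ∈ unionInrPowMulInl φ h St, f (g * x) =
      (∑ t : Fin (orderOf h), ψ h ^ (t : ℕ) * ∑ a ∈ St t, χ a) * f x := by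
  rw [sum_unionInrPowMulInl, sum_mul]
  refine sum_congr rfl fun t _ => ?_
  rw [← map_pow, sum_apply_inr_mul_inl_mul hf (hSt t), map_pow]

end SemidirectProduct

theorem split_metacyclic_cayley_eigenvector_general {K H : Type*} [Group K] [Group H]
    [Fintype K] [Fintype H] [DecidableEq K]
    {m l : ℕ}
    (k : K) (hkord : orderOf k = m) (hkgen : ∀ x : K, x ∈ Subgroup.zpowers k)
    (h : H) (hhord : orderOf h = l) (hhgen : ∀ x : H, x ∈ Subgroup.zpowers h)
    (φ : H →* MulAut K)
    (St : Fin l → Finset K) (hSconj : ∀ t : Fin l, ∀ x ∈ St t, φ h x ∈ St t)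
    (S : Set (K ⋊[φ] H))
    (hS : S = ⋃ t : Fin l, (fun x : K => (inr h : K ⋊[φ] H) ^ (t : ℕ) * inl x) '' ↑(St t))
    (u v : ℕ)
    (w : K ⋊[φ] H → ℂ)
    (hw : ∀ t s : ℕ, w ((inr h : K ⋊[φ] H) ^ t * (inl k : K ⋊[φ] H) ^ s) =
      Complex.exp (2 * Real.pi * Complex.I * u * t / l) *
        Complex.exp (2 * Real.pi * Complex.I * v * s / m)) :
    (Matrix.of fun x y : K ⋊[φ] H => S.indicator (fun _ => (1 : ℂ)) (y * x⁻¹)).mulVec w =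
      (∑ t : Fin l, Complex.exp (2 * Real.pi * Complex.I * u * (t : ℕ) / l) *
          ∑ s ∈ (Finset.range m).filter (fun s => k ^ s ∈ St t),
            Complex.exp (2 * Real.pi * Complex.I * v * s / m)) • w := by
  classical
  subst hkord hhord
  obtain ⟨χ, hχ⟩ := exists_monoidHom_apply_eq_of_pow_orderOf_eq_one hkgen
    (Complex.exp_two_pi_mul_I_mul_natCast_div_pow_self v (orderOf_pos k).ne')
  obtain ⟨ψ, hψ⟩ := exists_monoidHom_apply_eq_of_pow_orderOf_eq_one hhgen
    (Complex.exp_two_pi_mul_I_mul_natCast_div_pow_self u (orderOf_pos h).ne')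
  have hw_eq : ∀ b a, w (inr b * inl a) = ψ b * χ a := by
    intro b a
    obtain ⟨t, rfl⟩ := (Submonoid.mem_powers_iff _ _).mp
      (mem_powers_iff_mem_zpowers.mpr (hhgen b))
    obtain ⟨s, rfl⟩ := (Submonoid.mem_powers_iff _ _).mp
      (mem_powers_iff_mem_zpowers.mpr (hkgen a))
    rw [map_pow, map_pow, hw, map_pow, map_pow, hψ, hχ, Complex.exp_mul_natCast_div _ t,
      Complex.exp_mul_natCast_div _ s]
  have hSt : ∀ t r, φ r • St t = St t := fun t =>
    φ.smul_finset_eq_of_forall_mem_zpowers hhgen (hSconj t)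
  have hS_finset : S = ↑(unionInrPowMulInl φ h St) := by
    simp [hS, unionInrPowMulInl]
  ext x
  rw [hS_finset, Matrix.of_indicator_mul_inv_mulVec_apply,
    sum_unionInrPowMulInl_apply_mul hw_eq h St hSt, Pi.smul_apply, smul_eq_mul]
  congr 1
  refine sum_congr rfl fun t _ => ?_
  rw [Complex.exp_mul_natCast_div, ← hψ, ← sum_filter_range_orderOf_pow_mem hkgen]
  congr 1
  refine sum_congr rfl fun s _ => ?_
  rw [Complex.exp_mul_natCast_div, ← hχ, map_pow]

/-- Corollary 3.3 of the paper (eigenvector form): let `G = C_m ⋊[φ] C_l` be a split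
metacyclic group, where `C_m = ⟨k⟩` and `C_l = ⟨h⟩` are cyclic of orders `m` and `l`, and let
`S = S_0 ∪ h S_1 ∪ ⋯ ∪ h^{l-1} S_{l-1}` with `S_t ⊆ C_m` and `h S_t h⁻¹ ⊆ S_t`. Then for all
`0 ≤ u < l` and `0 ≤ v < m`, the vector `w(h^t k^s) = e^{2πiut/l} e^{2πivs/m}` is an
eigenvector of the adjacency matrix of the Cayley graph `Γ(G, S)` with eigenvalue
`∑_{t=0}^{l-1} e^{2πiut/l} (∑_{s : k^s ∈ S_t} e^{2πivs/m})`. -/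
theorem split_metacyclic_cayley_eigenvector {K H : Type*} [Group K] [Group H]
    [Fintype K] [Fintype H] [DecidableEq K]
    {m l : ℕ} (hm : 1 ≤ m) (hl : 1 ≤ l)
    (k : K) (hkord : orderOf k = m) (hkgen : ∀ x : K, x ∈ Subgroup.zpowers k)
    (h : H) (hhord : orderOf h = l) (hhgen : ∀ x : H, x ∈ Subgroup.zpowers h)
    (φ : H →* MulAut K)
    (St : Fin l → Finset K) (hSconj : ∀ t : Fin l, ∀ x ∈ St t, φ h x ∈ St t)
    (S : Set (K ⋊[φ] H))
    (hS : S = ⋃ t : Fin l, (fun x : K => (inr h : K ⋊[φ] H) ^ (t : ℕ) * inl x) '' ↑(St t))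
    (u v : ℕ) (hu : u < l) (hv : v < m)
    (w : K ⋊[φ] H → ℂ)
    (hw : ∀ t s : ℕ, w ((inr h : K ⋊[φ] H) ^ t * (inl k : K ⋊[φ] H) ^ s) =
      Complex.exp (2 * Real.pi * Complex.I * u * t / l) *
        Complex.exp (2 * Real.pi * Complex.I * v * s / m)) :
    (Matrix.of fun x y : K ⋊[φ] H => S.indicator (fun _ => (1 : ℂ)) (y * x⁻¹)).mulVec w =
      (∑ t : Fin l, Complex.exp (2 * Real.pi * Complex.I * u * (t : ℕ) / l) *
          ∑ s ∈ (Finset.range m).filter (fun s => k ^ s ∈ St t),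
            Complex.exp (2 * Real.pi * Complex.I * v * s / m)) • w :=
  split_metacyclic_cayley_eigenvector_general k hkord hkgen h hhord hhgen φ St hSconj S hS u v w hw
end
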